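/- Let π be an α-integral path with Q_α(π) ≤ −1, and let 0 = t_0 < ⋯ < t_{ℓ+1} = 1 be its α-section decomposition. Then e_α(π) is defined, is again α-integral, and satisfies Q_α(e_α π) = Q_α(π) + 1; the α-section decomposition of e_α(π) has the same subdivision points t_0 < ⋯ < t_{ℓ+1}. Moreover the interval [y,q] used in the definition of e_α is one of the pieces of the decomposition of π, namely a negatively directed section of α∘π at Q_α(π)+1, and it is a positively directed section of α∘(e_α π) at Q_α(π)+1; every piece contained in [0,y] has the same type and the same level for e_α(π) as for π, and every piece contained in [q,1] has the same type for e_α(π) as for π, with level increased by 2. -/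

import Mathlib

open Set

namespace MVPaper

variable {V : Type*} [AddCommGroup V] [Module ℝ V]

/-- `π` is piecewise linear (affine) on `[0,1]`. -/
def IsPWLinearOn (π : ℝ → V) : Prop :=
  ∃ (n : ℕ) (t : Fin (n + 1) → ℝ), Monotone t ∧ t 0 = 0 ∧ t (Fin.last n) = 1 ∧
    ∀ i : Fin n, ∃ a b : V, ∀ s ∈ Set.Icc (t i.castSucc) (t i.succ), π s = s • a + b

/-- A path: continuous piecewise linear with `π 0 = 0`. -/
def IsPath (π : ℝ → V) : Prop := π 0 = 0 ∧ IsPWLinearOn π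

/-- `t ∈ (0,1)` is a local minimum point of `f`. -/
def IsLocalMinPt (f : ℝ → ℝ) (t : ℝ) : Prop :=
  t ∈ Set.Ioo (0 : ℝ) 1 ∧ ∀ᶠ s in nhds t, f t ≤ f s

/-- `f` takes integer values at `0`, `1` and at local minimum points. -/
def IsIntegralFn (f : ℝ → ℝ) : Prop :=
  (∃ m : ℤ, f 0 = m) ∧ (∃ m : ℤ, f 1 = m) ∧ ∀ t, IsLocalMinPt f t → ∃ m : ℤ, f t = m

def IsZeroSectionAt (f : ℝ → ℝ) (m a b : ℝ) : Prop :=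
  0 ≤ a ∧ a < b ∧ b ≤ 1 ∧ ∀ t ∈ Set.Icc a b, f t = m

def IsPreStableAt (f : ℝ → ℝ) (m a b : ℝ) : Prop :=
  0 ≤ a ∧ a < b ∧ b ≤ 1 ∧ f a = m ∧ f b = m ∧ ∀ t ∈ Set.Ioo a b, m < f t

/-- A stable section: maximal among intervals on which `f` equals `m` at the ends and is
`> m` inside, for some integer level. -/
def IsStableSectionAt (f : ℝ → ℝ) (m a b : ℝ) : Prop :=
  IsPreStableAt f m a b ∧
    ∀ (m' : ℤ) (a' b' : ℝ), IsPreStableAt f (m' : ℝ) a' b' → a' ≤ a → b ≤ b' →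
      a' = a ∧ b' = b

def IsPosDirectedSectionAt (f : ℝ → ℝ) (m a b : ℝ) : Prop :=
  0 ≤ a ∧ a < b ∧ b ≤ 1 ∧ f a = m ∧ f b = m + 1 ∧
    ∀ t ∈ Set.Ioo a b, m < f t ∧ f t < m + 1

def IsNegDirectedSectionAt (f : ℝ → ℝ) (m a b : ℝ) : Prop :=
  0 ≤ a ∧ a < b ∧ b ≤ 1 ∧ f a = m ∧ f b = m - 1 ∧
    ∀ t ∈ Set.Ioo a b, m - 1 < f t ∧ f t < m

def IsSectionAt (f : ℝ → ℝ) (a b : ℝ) : Prop :=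
  ∃ m : ℤ, IsZeroSectionAt f (m : ℝ) a b ∨ IsStableSectionAt f (m : ℝ) a b ∨
    IsPosDirectedSectionAt f (m : ℝ) a b ∨ IsNegDirectedSectionAt f (m : ℝ) a b

/-- `a` and `b` are consecutive elements of the finite set `T`. -/
def Adjacent (T : Finset ℝ) (a b : ℝ) : Prop :=
  a ∈ T ∧ b ∈ T ∧ a < b ∧ ∀ c ∈ T, c ≤ a ∨ b ≤ c

/-- `T` is a subdivision of `[0,1]` each of whose consecutive intervals is a section of `f`. -/
def IsSectionDecomposition (f : ℝ → ℝ) (T : Finset ℝ) : Prop :=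
  (0 : ℝ) ∈ T ∧ (1 : ℝ) ∈ T ∧ (T : Set ℝ) ⊆ Set.Icc 0 1 ∧
    ∀ a b : ℝ, Adjacent T a b → IsSectionAt f a b

def NoTwoConsecutiveZeroSections (f : ℝ → ℝ) (T : Finset ℝ) : Prop :=
  ∀ a b c : ℝ, Adjacent T a b → Adjacent T b c →
    ¬ ((∃ m : ℤ, IsZeroSectionAt f (m : ℝ) a b) ∧ (∃ m : ℤ, IsZeroSectionAt f (m : ℝ) b c))

/-- `Q_β(π) = min β∘π` on `[0,1]`. -/
noncomputable def Qval (β : V →ₗ[ℝ] ℝ) (π : ℝ → V) : ℝ :=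
  sInf ((fun t => β (π t)) '' Set.Icc (0 : ℝ) 1)

/-- The reflection `s_β(v) = v - β(v)β^∨`. -/
def sRefl (β : V →ₗ[ℝ] ℝ) (βv : V) (v : V) : V := v - β v • βv

/-- `q`, the first time the minimum of `β∘π` is attained. -/
noncomputable def qTime (β : V →ₗ[ℝ] ℝ) (π : ℝ → V) : ℝ :=
  sInf {t | t ∈ Set.Icc (0 : ℝ) 1 ∧ β (π t) = Qval β π}

/-- `y`, the last time before `q` where `β∘π = Q+1`. -/
noncomputable def yTime (β : V →ₗ[ℝ] ℝ) (π : ℝ → V) : ℝ :=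
  sSup {t | t ∈ Set.Icc (0 : ℝ) 1 ∧ t < qTime β π ∧ β (π t) = Qval β π + 1}

/-- Littelmann raising operator. -/
noncomputable def eOp (β : V →ₗ[ℝ] ℝ) (βv : V) (π : ℝ → V) : ℝ → V := fun t =>
  if t ≤ yTime β π then π t
  else if t ≤ qTime β π then π (yTime β π) + sRefl β βv (π t - π (yTime β π))
  else π t + βv

/-- `p`, the last time the minimum of `β∘π` is attained. -/
noncomputable def pTime (β : V →ₗ[ℝ] ℝ) (π : ℝ → V) : ℝ :=
  sSup {t | t ∈ Set.Icc (0 : ℝ) 1 ∧ β (π t) = Qval β π}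

/-- `x`, the first time after `p` where `β∘π = Q+1`. -/
noncomputable def xTime (β : V →ₗ[ℝ] ℝ) (π : ℝ → V) : ℝ :=
  sInf {t | t ∈ Set.Icc (0 : ℝ) 1 ∧ pTime β π < t ∧ β (π t) = Qval β π + 1}

/-- Littelmann lowering operator. -/
noncomputable def fOp (β : V →ₗ[ℝ] ℝ) (βv : V) (π : ℝ → V) : ℝ → V := fun t =>
  if t ≤ pTime β π then π t
  else if t ≤ xTime β π then π (pTime β π) + sRefl β βv (π t - π (pTime β π))
  else π t - βv

noncomputable def phiVal (β : V →ₗ[ℝ] ℝ) (π : ℝ → V) : ℝ := β (π 1) - Qval β π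

/-- `e_β^{max}`: iterate `e_β` while `Q_β ≤ -1`, i.e. `ε_β(π)` many times. -/
noncomputable def eMax (β : V →ₗ[ℝ] ℝ) (βv : V) (π : ℝ → V) : ℝ → V :=
  (eOp β βv)^[⌊-(Qval β π)⌋₊] π

/-- `f_β^{max}`: iterate `f_β` while `φ_β ≥ 1`, i.e. `φ_β(π)` many times. -/
noncomputable def fMax (β : V →ₗ[ℝ] ℝ) (βv : V) (π : ℝ → V) : ℝ → V :=
  (fOp β βv)^[⌊phiVal β π⌋₊] π

/-!
Write `f = β ∘ π` and `Q = Q_β(π)`. Integrality makes `Q` an integer and forbids local minima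
of `f` with values in `(Q, Q + 1)` before the first minimum point `q`; together with the choice
of `y` this gives `f ≥ Q + 1` on `[0, y]`, `Q < f < Q + 1` on `(y, q)`, and no local maximum of
`f` in `(y, q)`. The function `β ∘ e_β π` equals `f` on `[0, y]`, `2 (Q + 1) - f` on `[y, q]`
and `f + 2` on `[q, 1]`. A stable interval at an integer level, of either function, never meets
`(y, q)`; so on `[0, y]` and on `[q, 1]` the sections of the two functions correspond with level
shift `0` resp. `2`, while `[y, q]`, necessarily a piece of any section decomposition, turns from
a negatively into a positively directed section.
-/

lemma exists_adjacent_lt_le {T : Finset ℝ} {a₀ b₀ x : ℝ} (ha₀ : a₀ ∈ T) (hb₀ : b₀ ∈ T)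
    (hx : x ∈ Ioc a₀ b₀) : ∃ a b, Adjacent T a b ∧ x ∈ Ioc a b := by
  classical
  have hL : (T.filter (· < x)).Nonempty := ⟨a₀, Finset.mem_filter.2 ⟨ha₀, hx.1⟩⟩
  have hR : (T.filter (x ≤ ·)).Nonempty := ⟨b₀, Finset.mem_filter.2 ⟨hb₀, hx.2⟩⟩
  obtain ⟨haT, hax⟩ := Finset.mem_filter.1 ((T.filter (· < x)).max'_mem hL)
  obtain ⟨hbT, hxb⟩ := Finset.mem_filter.1 ((T.filter (x ≤ ·)).min'_mem hR)
  refine ⟨_, _, ⟨haT, hbT, hax.trans_le hxb, fun c hc => ?_⟩, hax, hxb⟩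
  rcases lt_or_ge c x with h | h
  · exact Or.inl (Finset.le_max' _ c (Finset.mem_filter.2 ⟨hc, h⟩))
  · exact Or.inr (Finset.min'_le _ c (Finset.mem_filter.2 ⟨hc, h⟩))

lemma Adjacent.le_or_eq_or_le {T : Finset ℝ} {y q a b : ℝ} (hyq : Adjacent T y q)
    (hab : Adjacent T a b) : b ≤ y ∨ (a = y ∧ b = q) ∨ q ≤ a := by
  obtain ⟨hyT, hqT, hyq, hy⟩ := hyq
  obtain ⟨haT, hbT, hab, ha⟩ := hab
  rcases ha y hyT with hya | hby
  · rcases ha q hqT with hqa | hbq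
    · exact Or.inr (Or.inr hqa)
    · exact Or.inr (Or.inl ⟨le_antisymm ((hy a haT).resolve_right (by linarith)) hya,
        le_antisymm hbq ((hy b hbT).resolve_left (by linarith))⟩)
  · exact Or.inl hby

section SectionShift

variable {f g : ℝ → ℝ} {a b c m : ℝ}

lemma isZeroSectionAt_iff_of_eq_add (h : ∀ t ∈ Icc a b, g t = f t + c) :
    IsZeroSectionAt f m a b ↔ IsZeroSectionAt g (m + c) a b := by
  unfold IsZeroSectionAt
  refine and_congr_right fun _ => and_congr_right fun _ => and_congr_right fun _ =>
    forall₂_congr fun t ht => ?_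
  rw [h t ht, add_left_inj]

lemma isPreStableAt_iff_of_eq_add (h : ∀ t ∈ Icc a b, g t = f t + c) :
    IsPreStableAt f m a b ↔ IsPreStableAt g (m + c) a b := by
  unfold IsPreStableAt
  constructor <;> rintro ⟨h0, hab, h1, ha, hb, hI⟩ <;>
    have := h a (left_mem_Icc.2 hab.le) <;> have := h b (right_mem_Icc.2 hab.le) <;>
    refine ⟨h0, hab, h1, by linarith, by linarith, fun t ht => ?_⟩ <;>
    linarith [h t (Ioo_subset_Icc_self ht), hI t ht]

lemma isPosDirectedSectionAt_iff_of_eq_add (h : ∀ t ∈ Icc a b, g t = f t + c) :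
    IsPosDirectedSectionAt f m a b ↔ IsPosDirectedSectionAt g (m + c) a b := by
  unfold IsPosDirectedSectionAt
  constructor <;> rintro ⟨h0, hab, h1, ha, hb, hI⟩ <;>
    have := h a (left_mem_Icc.2 hab.le) <;> have := h b (right_mem_Icc.2 hab.le) <;>
    refine ⟨h0, hab, h1, by linarith, by linarith, fun t ht => ?_⟩ <;>
    obtain ⟨h2, h3⟩ := hI t ht <;> have := h t (Ioo_subset_Icc_self ht) <;>
    constructor <;> linarith

lemma isNegDirectedSectionAt_iff_of_eq_add (h : ∀ t ∈ Icc a b, g t = f t + c) :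
    IsNegDirectedSectionAt f m a b ↔ IsNegDirectedSectionAt g (m + c) a b := by
  unfold IsNegDirectedSectionAt
  constructor <;> rintro ⟨h0, hab, h1, ha, hb, hI⟩ <;>
    have := h a (left_mem_Icc.2 hab.le) <;> have := h b (right_mem_Icc.2 hab.le) <;>
    refine ⟨h0, hab, h1, by linarith, by linarith, fun t ht => ?_⟩ <;>
    obtain ⟨h2, h3⟩ := hI t ht <;> have := h t (Ioo_subset_Icc_self ht) <;>
    constructor <;> linarith

lemma isStableSectionAt_iff_of_eq_add {k : ℤ} (h : ∀ t ∈ Icc a b, g t = f t + k)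
    (hf : ∀ (m' : ℤ) a' b', IsPreStableAt f m' a' b' → a' ≤ a → b ≤ b' →
      ∀ t ∈ Icc a' b', g t = f t + k)
    (hg : ∀ (m' : ℤ) a' b', IsPreStableAt g m' a' b' → a' ≤ a → b ≤ b' →
      ∀ t ∈ Icc a' b', g t = f t + k) :
    IsStableSectionAt f m a b ↔ IsStableSectionAt g (m + k) a b := by
  unfold IsStableSectionAt
  rw [← isPreStableAt_iff_of_eq_add h]
  refine and_congr_right fun _ => ⟨fun hmax m' a' b' hpre ha hb => ?_,
    fun hmax m' a' b' hpre ha hb => ?_⟩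
  · refine hmax (m' - k) a' b' ?_ ha hb
    rw [isPreStableAt_iff_of_eq_add (hg m' a' b' hpre ha hb)]
    simpa using hpre
  · exact hmax (m' + k) a' b' (by
      exact_mod_cast (isPreStableAt_iff_of_eq_add (hf m' a' b' hpre ha hb)).1 hpre) ha hb

lemma sectionKinds_iff_of_eq_add {k : ℤ} (h : ∀ t ∈ Icc a b, g t = f t + k)
    (hf : ∀ (m' : ℤ) a' b', IsPreStableAt f m' a' b' → a' ≤ a → b ≤ b' →
      ∀ t ∈ Icc a' b', g t = f t + k)
    (hg : ∀ (m' : ℤ) a' b', IsPreStableAt g m' a' b' → a' ≤ a → b ≤ b' →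
      ∀ t ∈ Icc a' b', g t = f t + k) :
    (IsZeroSectionAt f m a b ↔ IsZeroSectionAt g (m + k) a b) ∧
    (IsStableSectionAt f m a b ↔ IsStableSectionAt g (m + k) a b) ∧
    (IsPosDirectedSectionAt f m a b ↔ IsPosDirectedSectionAt g (m + k) a b) ∧
    (IsNegDirectedSectionAt f m a b ↔ IsNegDirectedSectionAt g (m + k) a b) :=
  ⟨isZeroSectionAt_iff_of_eq_add h, isStableSectionAt_iff_of_eq_add h hf hg,
    isPosDirectedSectionAt_iff_of_eq_add h, isNegDirectedSectionAt_iff_of_eq_add h⟩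

end SectionShift

lemma intCast_add_one_le_of_lt {k m : ℤ} (h : (k : ℝ) < m) : (k : ℝ) + 1 ≤ m := by
  exact_mod_cast Int.add_one_le_of_lt (by exact_mod_cast h)

lemma IsIntegralFn.add_one_le_of_isLocalMin {f : ℝ → ℝ} (hint : IsIntegralFn f) {k : ℤ} {z : ℝ}
    (hz : z ∈ Ioo 0 1) (hmin : IsLocalMin f z) (hlt : (k : ℝ) < f z) : (k : ℝ) + 1 ≤ f z := by
  obtain ⟨m, hm⟩ := hint.2.2 z ⟨hz, hmin⟩
  rw [hm] at hlt ⊢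
  exact intCast_add_one_le_of_lt hlt

section RealFunctions

variable {f : ℝ → ℝ} {a b c : ℝ}

lemma le_on_Icc_of_isLocalMin (hcont : ContinuousOn f (Icc a b)) (hab : a ≤ b)
    (ha : c ≤ f a) (hb : c ≤ f b) (hloc : ∀ z ∈ Ioo a b, IsLocalMin f z → c ≤ f z) :
    ∀ t ∈ Icc a b, c ≤ f t := by
  obtain ⟨z, hz, hmin⟩ := isCompact_Icc.exists_isMinOn (nonempty_Icc.2 hab) hcont
  intro t ht
  refine le_trans ?_ (hmin ht)
  rcases eq_or_lt_of_le hz.1 with rfl | hza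
  · exact ha
  rcases eq_or_lt_of_le hz.2 with rfl | hzb
  · exact hb
  exact hloc z ⟨hza, hzb⟩ (hmin.isLocalMin (Icc_mem_nhds hza hzb))

lemma exists_isLocalMin_of_isLocalMax (hcont : ContinuousOn f (Icc a b)) (hab : a < b)
    (hlt : f b < f a) (hmax : IsLocalMax f b) : ∃ z ∈ Ioo a b, IsLocalMin f z ∧ f z ≤ f b := by
  obtain ⟨z, hz, hmin⟩ := isCompact_Icc.exists_isMinOn (nonempty_Icc.2 hab.le) hcont
  have hzb : f z ≤ f b := hmin (right_mem_Icc.2 hab.le)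
  obtain ⟨s, hs, hsmin⟩ : ∃ s ∈ Ioo a b, IsMinOn f (Icc a b) s := by
    rcases eq_or_lt_of_le hz.2 with rfl | hzb'
    · -- `f ≤ f z` just left of the minimum point `z`, so those points are minimum points too
      obtain ⟨s, hsz, hs⟩ := ((hmax.filter_mono nhdsWithin_le_nhds).and (Ioo_mem_nhdsLT hab)).exists
      exact ⟨s, hs, isMinOn_iff.2 fun t ht => hsz.trans (hmin ht)⟩
    · exact ⟨z, ⟨lt_of_le_of_ne hz.1 (by rintro rfl; linarith), hzb'⟩, hmin⟩
  exact ⟨s, hs, hsmin.isLocalMin (Icc_mem_nhds hs.1 hs.2), hsmin (right_mem_Icc.2 hab.le)⟩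

end RealFunctions

/-- The configuration of `Q_β(π)`, `y` and `q` from the definition of `e_β`, for `f = β ∘ π`. -/
structure IsLastDescentToMin (f : ℝ → ℝ) (Q y q : ℝ) : Prop where
  exists_int : ∃ k : ℤ, Q = k
  negDirected : IsNegDirectedSectionAt f (Q + 1) y q
  le_apply : ∀ t ∈ Icc (0 : ℝ) 1, Q ≤ f t
  lt_apply : ∀ t ∈ Ico (0 : ℝ) q, Q < f t
  add_one_le_apply : ∀ t ∈ Icc (0 : ℝ) y, Q + 1 ≤ f t

/-- `β ∘ e_β π` in terms of `f = β ∘ π`. -/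
noncomputable def raiseFn (f : ℝ → ℝ) (y q : ℝ) : ℝ → ℝ := fun t =>
  if t ≤ y then f t else if t ≤ q then 2 * f y - f t else f t + 2

lemma raiseFn_of_le {f : ℝ → ℝ} {y q t : ℝ} (ht : t ≤ y) : raiseFn f y q t = f t := if_pos ht

namespace IsLastDescentToMin

variable {f : ℝ → ℝ} {Q y q t a b : ℝ} {T : Finset ℝ}

lemma apply_y (hw : IsLastDescentToMin f Q y q) : f y = Q + 1 := hw.negDirected.2.2.2.1

lemma apply_q (hw : IsLastDescentToMin f Q y q) : f q = Q := by linarith [hw.negDirected.2.2.2.2.1]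

lemma lt_add_one_of_mem_Ioc (hw : IsLastDescentToMin f Q y q) (ht : t ∈ Ioc y q) :
    f t < Q + 1 := by
  rcases eq_or_lt_of_le ht.2 with rfl | htq
  · linarith [hw.apply_q]
  · exact (hw.negDirected.2.2.2.2.2 t ⟨ht.1, htq⟩).2

lemma raiseFn_of_mem_Icc (hw : IsLastDescentToMin f Q y q) (ht : t ∈ Icc y q) :
    raiseFn f y q t = 2 * (Q + 1) - f t := by
  unfold raiseFn
  rcases eq_or_lt_of_le ht.1 with rfl | hyt
  · simp [hw.apply_y]; ring
  · rw [if_neg hyt.not_ge, if_pos ht.2, hw.apply_y]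

lemma raiseFn_of_ge (hw : IsLastDescentToMin f Q y q) (ht : q ≤ t) :
    raiseFn f y q t = f t + 2 := by
  unfold raiseFn
  rw [if_neg (hw.negDirected.2.1.trans_le ht).not_ge]
  rcases eq_or_lt_of_le ht with rfl | hqt
  · simp [hw.apply_y, hw.apply_q]; ring
  · rw [if_neg hqt.not_ge]

lemma add_one_lt_raiseFn (hw : IsLastDescentToMin f Q y q) (ht : t ∈ Ioc y 1) :
    Q + 1 < raiseFn f y q t := by
  rcases le_or_gt t q with htq | hqt
  · rw [hw.raiseFn_of_mem_Icc ⟨ht.1.le, htq⟩]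
    linarith [hw.lt_add_one_of_mem_Ioc ⟨ht.1, htq⟩]
  · rw [hw.raiseFn_of_ge hqt.le]
    linarith [hw.le_apply t ⟨(hw.negDirected.1.trans ht.1.le), ht.2⟩]

lemma add_one_le_raiseFn (hw : IsLastDescentToMin f Q y q) (ht : t ∈ Icc 0 1) :
    Q + 1 ≤ raiseFn f y q t := by
  rcases le_or_gt t y with hty | hyt
  · rw [raiseFn_of_le hty]
    exact hw.add_one_le_apply t ⟨ht.1, hty⟩
  · exact (hw.add_one_lt_raiseFn ⟨hyt, ht.2⟩).le

lemma raiseFn_lt_add_two (hw : IsLastDescentToMin f Q y q) (ht : t ∈ Ico y q) :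
    raiseFn f y q t < Q + 2 := by
  rw [hw.raiseFn_of_mem_Icc ⟨ht.1, ht.2.le⟩]
  linarith [hw.lt_apply t ⟨hw.negDirected.1.trans ht.1, ht.2⟩]

lemma isLeast_raiseFn (hw : IsLastDescentToMin f Q y q) :
    IsLeast (raiseFn f y q '' Icc 0 1) (Q + 1) :=
  ⟨⟨y, ⟨hw.negDirected.1, hw.negDirected.2.1.le.trans hw.negDirected.2.2.1⟩,
      by rw [raiseFn_of_le le_rfl, hw.apply_y]⟩,
    by rintro _ ⟨t, ht, rfl⟩; exact hw.add_one_le_raiseFn ht⟩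

lemma posDirected_raiseFn (hw : IsLastDescentToMin f Q y q) :
    IsPosDirectedSectionAt (raiseFn f y q) (Q + 1) y q := by
  obtain ⟨hy0, hyq, hq1, -, -, hI⟩ := hw.negDirected
  refine ⟨hy0, hyq, hq1, by rw [raiseFn_of_le le_rfl, hw.apply_y], ?_, fun t ht => ?_⟩
  · rw [hw.raiseFn_of_ge le_rfl, hw.apply_q]; ring
  · rw [hw.raiseFn_of_mem_Icc (Ioo_subset_Icc_self ht)]
    constructor <;> linarith [hI t ht]

lemma not_isLocalMax (hw : IsLastDescentToMin f Q y q) (hcont : ContinuousOn f (Icc 0 1))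
    (hint : IsIntegralFn f) (ht : t ∈ Ioo y q) : ¬ IsLocalMax f t := by
  intro hmax
  obtain ⟨k, rfl⟩ := hw.exists_int
  obtain ⟨hy0, -, hq1, -, -, hI⟩ := hw.negDirected
  have hft := hI t ht
  obtain ⟨z, hz, hzmin, hzt⟩ := exists_isLocalMin_of_isLocalMax
    (hcont.mono (Icc_subset_Icc hy0 (ht.2.le.trans hq1))) ht.1
    (by rw [hw.apply_y]; exact hft.2) hmax
  have hz' : z ∈ Ico 0 q := ⟨hy0.trans hz.1.le, hz.2.trans ht.2⟩
  have := hint.add_one_le_of_isLocalMin ⟨hy0.trans_lt hz.1, hz'.2.trans_le hq1⟩ hzmin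
    (hw.lt_apply z hz')
  linarith [hft.2]

lemma isIntegralFn_raiseFn (hw : IsLastDescentToMin f Q y q) (hcont : ContinuousOn f (Icc 0 1))
    (hint : IsIntegralFn f) : IsIntegralFn (raiseFn f y q) := by
  obtain ⟨k, rfl⟩ := hw.exists_int
  obtain ⟨hy0, -, hq1, -, -, -⟩ := hw.negDirected
  obtain ⟨m₀, h₀⟩ := hint.1
  obtain ⟨m₁, h₁⟩ := hint.2.1
  refine ⟨⟨m₀, by rw [raiseFn_of_le hy0, h₀]⟩,
    ⟨m₁ + 2, by rw [hw.raiseFn_of_ge hq1, h₁]; push_cast; ring⟩, ?_⟩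
  rintro u ⟨hu, hmin⟩
  rcases lt_trichotomy u y with huy | rfl | hyu
  · have hfmin : IsLocalMin f u := by
      filter_upwards [hmin, Iio_mem_nhds huy] with s hs hsy
      rwa [raiseFn_of_le huy.le, raiseFn_of_le hsy.le] at hs
    obtain ⟨m, hm⟩ := hint.2.2 u ⟨hu, hfmin⟩
    exact ⟨m, by rw [raiseFn_of_le huy.le, hm]⟩
  · exact ⟨k + 1, by rw [raiseFn_of_le le_rfl, hw.apply_y]; push_cast; ring⟩
  rcases lt_trichotomy u q with huq | rfl | hqu
  · -- on `(y, q)` the graph of `f` is reflected, so a local minimum would be a local maximum of `f`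
    refine absurd ?_ (hw.not_isLocalMax hcont hint ⟨hyu, huq⟩)
    filter_upwards [hmin, Ioo_mem_nhds hyu huq] with s hs hs'
    rw [hw.raiseFn_of_mem_Icc ⟨hyu.le, huq.le⟩, hw.raiseFn_of_mem_Icc (Ioo_subset_Icc_self hs')]
      at hs
    linarith
  · exact ⟨k + 2, by rw [hw.raiseFn_of_ge le_rfl, hw.apply_q]; push_cast; ring⟩
  · have hfmin : IsLocalMin f u := by
      filter_upwards [hmin, Ioi_mem_nhds hqu] with s hs hsq
      rw [hw.raiseFn_of_ge hqu.le, hw.raiseFn_of_ge hsq.le] at hs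
      linarith
    obtain ⟨m, hm⟩ := hint.2.2 u ⟨hu, hfmin⟩
    exact ⟨m + 2, by rw [hw.raiseFn_of_ge hqu.le, hm]; push_cast; ring⟩

lemma le_or_le_of_isPreStableAt (hw : IsLastDescentToMin f Q y q) {m : ℤ}
    (h : IsPreStableAt f m a b) : b ≤ y ∨ q ≤ a := by
  obtain ⟨ha0, -, -, hfa, hfb, hI⟩ := h
  by_contra! hcon
  obtain ⟨k, rfl⟩ := hw.exists_int
  have hm : (k : ℝ) + 1 ≤ m := intCast_add_one_le_of_lt (hfa ▸ hw.lt_apply a ⟨ha0, hcon.2⟩)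
  rcases le_or_gt b q with hbq | hqb
  · linarith [hw.lt_add_one_of_mem_Ioc ⟨hcon.1, hbq⟩]
  · linarith [hI q ⟨hcon.2, hqb⟩, hw.apply_q]

lemma le_or_le_of_isPreStableAt_raiseFn (hw : IsLastDescentToMin f Q y q) {m : ℤ}
    (h : IsPreStableAt (raiseFn f y q) m a b) : b ≤ y ∨ q ≤ a := by
  obtain ⟨-, -, hb1, hga, hgb, hI⟩ := h
  by_contra! hcon
  obtain ⟨k, rfl⟩ := hw.exists_int
  have hm : ((k + 1 : ℤ) : ℝ) + 1 ≤ m :=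
    intCast_add_one_le_of_lt (by push_cast; exact hgb ▸ hw.add_one_lt_raiseFn ⟨hcon.1, hb1⟩)
  push_cast at hm
  rcases lt_or_ge a y with hay | hya
  · linarith [hI y ⟨hay, hcon.1⟩, raiseFn_of_le (f := f) (q := q) (le_refl y), hw.apply_y]
  · linarith [hw.raiseFn_lt_add_two ⟨hya, hcon.2⟩]

lemma sectionKinds_iff_of_le (hw : IsLastDescentToMin f Q y q) (hab : a < b) (hb : b ≤ y)
    (m : ℝ) :
    (IsZeroSectionAt f m a b ↔ IsZeroSectionAt (raiseFn f y q) m a b) ∧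
    (IsStableSectionAt f m a b ↔ IsStableSectionAt (raiseFn f y q) m a b) ∧
    (IsPosDirectedSectionAt f m a b ↔ IsPosDirectedSectionAt (raiseFn f y q) m a b) ∧
    (IsNegDirectedSectionAt f m a b ↔ IsNegDirectedSectionAt (raiseFn f y q) m a b) := by
  have heq : ∀ a' b', b' ≤ y → ∀ t ∈ Icc a' b', raiseFn f y q t = f t + ((0 : ℤ) : ℝ) :=
    fun a' b' hb' t ht => by simp [raiseFn_of_le (ht.2.trans hb')]
  have hreg : ∀ a' b', b' ≤ y ∨ q ≤ a' → a' ≤ a → b ≤ b' →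
      ∀ t ∈ Icc a' b', raiseFn f y q t = f t + ((0 : ℤ) : ℝ) := fun a' b' h ha' _ =>
    heq a' b' (h.resolve_right fun hqa => by linarith [hw.negDirected.2.1])
  simpa using sectionKinds_iff_of_eq_add (m := m) (heq a b hb)
    (fun _ a' b' h => hreg a' b' (hw.le_or_le_of_isPreStableAt h))
    (fun _ a' b' h => hreg a' b' (hw.le_or_le_of_isPreStableAt_raiseFn h))

lemma sectionKinds_iff_of_ge (hw : IsLastDescentToMin f Q y q) (hab : a < b) (ha : q ≤ a)
    (m : ℝ) :
    (IsZeroSectionAt f m a b ↔ IsZeroSectionAt (raiseFn f y q) (m + 2) a b) ∧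
    (IsStableSectionAt f m a b ↔ IsStableSectionAt (raiseFn f y q) (m + 2) a b) ∧
    (IsPosDirectedSectionAt f m a b ↔ IsPosDirectedSectionAt (raiseFn f y q) (m + 2) a b) ∧
    (IsNegDirectedSectionAt f m a b ↔ IsNegDirectedSectionAt (raiseFn f y q) (m + 2) a b) := by
  have heq : ∀ a' b', q ≤ a' → ∀ t ∈ Icc a' b', raiseFn f y q t = f t + ((2 : ℤ) : ℝ) :=
    fun a' b' ha' t ht => by simp [hw.raiseFn_of_ge (ha'.trans ht.1)]
  have hreg : ∀ a' b', b' ≤ y ∨ q ≤ a' → a' ≤ a → b ≤ b' →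
      ∀ t ∈ Icc a' b', raiseFn f y q t = f t + ((2 : ℤ) : ℝ) := fun a' b' h _ hb' =>
    heq a' b' (h.resolve_left fun hby => by linarith [hw.negDirected.2.1])
  simpa using sectionKinds_iff_of_eq_add (m := m) (heq a b ha)
    (fun _ a' b' h => hreg a' b' (hw.le_or_le_of_isPreStableAt h))
    (fun _ a' b' h => hreg a' b' (hw.le_or_le_of_isPreStableAt_raiseFn h))

lemma adjacent_of_isSectionDecomposition (hw : IsLastDescentToMin f Q y q)
    (hT : IsSectionDecomposition f T) : Adjacent T y q := by
  obtain ⟨k, rfl⟩ := hw.exists_int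
  obtain ⟨hy0, hyq, hq1, hfy, -, hI⟩ := hw.negDirected
  obtain ⟨a, b, hab, haq, hqb⟩ := exists_adjacent_lt_le hT.1 hT.2.1 ⟨hy0.trans_lt hyq, hq1⟩
  have hfq := hw.apply_q
  have hfa := hw.lt_apply a ⟨(hT.2.2.1 hab.1).1, haq⟩
  obtain ⟨m, hz | hs | hp | hn⟩ := hT.2.2.2 a b hab
  · linarith [hz.2.2.2 a ⟨le_rfl, hab.2.2.1.le⟩, hz.2.2.2 q ⟨haq.le, hqb⟩]
  · have hm := intCast_add_one_le_of_lt (hs.1.2.2.2.1 ▸ hfa)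
    rcases eq_or_lt_of_le hqb with rfl | hqb
    · linarith [hs.1.2.2.2.2.1]
    · linarith [hs.1.2.2.2.2.2 q ⟨haq, hqb⟩]
  · have hm := intCast_add_one_le_of_lt (hp.2.2.2.1 ▸ hfa)
    rcases eq_or_lt_of_le hqb with rfl | hqb
    · linarith [hp.2.2.2.2.1]
    · linarith [(hp.2.2.2.2.2 q ⟨haq, hqb⟩).1]
  · obtain ⟨-, -, -, hna, hnb, hnI⟩ := hn
    have hm := intCast_add_one_le_of_lt (hna ▸ hfa)
    rcases eq_or_lt_of_le hqb with rfl | hqb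
    · rcases lt_trichotomy a y with hay | rfl | hya
      · linarith [(hnI y ⟨hay, hyq⟩).2]
      · exact hab
      · linarith [(hI a ⟨hya, haq⟩).2]
    · linarith [(hnI q ⟨haq, hqb⟩).1]

lemma isSectionAt_raiseFn (hw : IsLastDescentToMin f Q y q) (hyq : Adjacent T y q)
    (hab : Adjacent T a b) (h : IsSectionAt f a b) : IsSectionAt (raiseFn f y q) a b := by
  obtain ⟨m, h⟩ := h
  rcases hyq.le_or_eq_or_le hab with hb | ⟨rfl, rfl⟩ | ha
  · obtain ⟨hz, hs, hp, hn⟩ := hw.sectionKinds_iff_of_le hab.2.2.1 hb m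
    exact ⟨m, h.imp hz.1 (Or.imp hs.1 (Or.imp hp.1 hn.1))⟩
  · obtain ⟨k, hk⟩ := hw.exists_int
    exact ⟨k + 1, Or.inr (Or.inr (Or.inl (by push_cast; exact hk ▸ hw.posDirected_raiseFn)))⟩
  · obtain ⟨hz, hs, hp, hn⟩ := hw.sectionKinds_iff_of_ge hab.2.2.1 ha m
    exact ⟨m + 2, by push_cast; exact h.imp hz.1 (Or.imp hs.1 (Or.imp hp.1 hn.1))⟩

lemma exists_isZeroSectionAt_of_raiseFn (hw : IsLastDescentToMin f Q y q)
    (hyq : Adjacent T y q) (hab : Adjacent T a b) {m : ℤ}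
    (h : IsZeroSectionAt (raiseFn f y q) m a b) : ∃ m' : ℤ, IsZeroSectionAt f m' a b := by
  rcases hyq.le_or_eq_or_le hab with hb | ⟨rfl, rfl⟩ | ha
  · exact ⟨m, (hw.sectionKinds_iff_of_le hab.2.2.1 hb m).1.2 h⟩
  · have hy := h.2.2.2 a (left_mem_Icc.2 hab.2.2.1.le)
    have hq := h.2.2.2 b (right_mem_Icc.2 hab.2.2.1.le)
    rw [raiseFn_of_le le_rfl, hw.apply_y] at hy
    rw [hw.raiseFn_of_ge le_rfl, hw.apply_q] at hq
    linarith
  · refine ⟨m - 2, (hw.sectionKinds_iff_of_ge hab.2.2.1 ha _).1.2 ?_⟩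
    push_cast
    rwa [sub_add_cancel]

end IsLastDescentToMin

def IsAffineOn (π : ℝ → V) (c d : ℝ) : Prop :=
  ∃ a b : V, ∀ s ∈ Icc c d, π s = s • a + b

lemma exists_mem_Ioc_castSucc_succ {n : ℕ} {t : Fin (n + 1) → ℝ} (ht0 : t 0 = 0)
    (htl : t (Fin.last n) = 1) {s : ℝ} (hs : s ∈ Ioc 0 1) :
    ∃ i : Fin n, s ∈ Ioc (t i.castSucc) (t i.succ) := by
  classical
  obtain ⟨i, hi, hmin⟩ := (Finset.univ.filter fun i : Fin (n + 1) => s ≤ t i).exists_min_image id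
    ⟨Fin.last n, by simp [htl, hs.2]⟩
  rw [Finset.mem_filter] at hi
  induction i using Fin.cases with
  | zero => linarith [ht0 ▸ hi.2, hs.1]
  | succ j =>
    refine ⟨j, lt_of_not_ge fun h => ?_, hi.2⟩
    exact (Fin.castSucc_lt_succ (i := j)).not_ge
      (hmin j.castSucc (Finset.mem_filter.2 ⟨Finset.mem_univ _, h⟩))

lemma IsPWLinearOn.continuousOn {π : ℝ → V} (h : IsPWLinearOn π) (β : V →ₗ[ℝ] ℝ) :
    ContinuousOn (fun s => β (π s)) (Icc 0 1) := by
  obtain ⟨n, t, hmono, ht0, htl, hpiece⟩ := h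
  have hcover : Icc (0 : ℝ) 1 ⊆ ⋃ i : Fin n, Icc (t i.castSucc) (t i.succ) := by
    intro s hs
    obtain ⟨i, hi⟩ := exists_mem_Ioc_castSucc_succ ht0 htl ⟨one_pos, le_rfl⟩
    rcases eq_or_lt_of_le hs.1 with rfl | hs0
    · exact mem_iUnion.2 ⟨⟨0, i.pos⟩, by simp [ht0], ht0 ▸ hmono (Fin.zero_le _)⟩
    · obtain ⟨j, hj⟩ := exists_mem_Ioc_castSucc_succ ht0 htl ⟨hs0, hs.2⟩
      exact mem_iUnion.2 ⟨j, hj.1.le, hj.2⟩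
  refine ContinuousOn.mono ?_ hcover
  refine (locallyFinite_of_finite _).continuousOn_iUnion (fun _ => isClosed_Icc) fun i => ?_
  obtain ⟨a, b, hab⟩ := hpiece i
  refine ContinuousOn.congr (f := fun s : ℝ => s * β a + β b) (by fun_prop) fun s hs => ?_
  simp [hab s hs]

lemma IsPWLinearOn.isAffineOn_of_adjacent {π : ℝ → V} (h : IsPWLinearOn π) :
    ∃ S : Finset ℝ, (S : Set ℝ) ⊆ Icc 0 1 ∧ (0 : ℝ) ∈ S ∧ (1 : ℝ) ∈ S ∧
      ∀ S' : Finset ℝ, S ⊆ S' → (S' : Set ℝ) ⊆ Icc 0 1 →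
        ∀ c d, Adjacent S' c d → IsAffineOn π c d := by
  classical
  obtain ⟨n, t, hmono, ht0, htl, hpiece⟩ := h
  have ht : ∀ i, t i ∈ Finset.univ.image t := fun i => Finset.mem_image_of_mem t (Finset.mem_univ i)
  refine ⟨Finset.univ.image t, ?_, ht0 ▸ ht 0, htl ▸ ht _, fun S' hS' hS'01 c d hcd => ?_⟩
  · simp only [Finset.coe_image, Finset.coe_univ, image_univ, range_subset_iff]
    exact fun i => ⟨ht0 ▸ hmono (Fin.zero_le i), htl ▸ hmono (Fin.le_last i)⟩
  obtain ⟨hc, hd, hcd, hsep⟩ := hcd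
  obtain ⟨i, hi⟩ := exists_mem_Ioc_castSucc_succ ht0 htl
    ⟨(hS'01 hc).1.trans_lt hcd, (hS'01 hd).2⟩
  have htc : t i.castSucc ≤ c := (hsep _ (hS' (ht _))).resolve_right hi.1.not_ge
  obtain ⟨a, b, hab⟩ := hpiece i
  exact ⟨a, b, fun s hs => hab s ⟨htc.trans hs.1, hs.2.trans hi.2⟩⟩

lemma isPWLinearOn_of_isAffineOn_adjacent {π : ℝ → V} {S : Finset ℝ} (hS : (S : Set ℝ) ⊆ Icc 0 1)
    (h0 : (0 : ℝ) ∈ S) (h1 : (1 : ℝ) ∈ S) (haff : ∀ c d, Adjacent S c d → IsAffineOn π c d) :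
    IsPWLinearOn π := by
  set N := S.card - 1
  have hcard : S.card = N + 1 := by have := Finset.card_pos.2 ⟨0, h0⟩; omega
  set u := S.orderEmbOfFin hcard
  have hu : ∀ x ∈ S, ∃ k, u k = x := fun x hx => by
    rw [← Finset.mem_coe, ← S.range_orderEmbOfFin hcard] at hx
    exact hx
  have humem : ∀ k, u k ∈ S := S.orderEmbOfFin_mem hcard
  refine ⟨N, u, u.monotone, ?_, ?_, fun i => haff _ _ ⟨humem _, humem _,
    u.strictMono Fin.castSucc_lt_succ, fun c hc => ?_⟩⟩
  · obtain ⟨k, hk⟩ := hu 0 h0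
    exact le_antisymm (hk ▸ u.monotone (Fin.zero_le k)) (hS (humem 0)).1
  · obtain ⟨k, hk⟩ := hu 1 h1
    exact le_antisymm (hS (humem _)).2 (hk ▸ u.monotone (Fin.le_last k))
  · obtain ⟨k, rfl⟩ := hu c hc
    rcases le_or_gt k i.castSucc with hk | hk
    · exact Or.inl (u.monotone hk)
    · exact Or.inr (u.monotone (Fin.castSucc_lt_iff_succ_le.1 hk))

section Raising

variable {β : V →ₗ[ℝ] ℝ} {βv : V} {π : ℝ → V} {t : ℝ}

lemma sRefl_add (v w : V) : sRefl β βv (v + w) = sRefl β βv v + sRefl β βv w := by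
  simp only [sRefl, map_add, add_smul]; abel

lemma sRefl_smul (r : ℝ) (v : V) : sRefl β βv (r • v) = r • sRefl β βv v := by
  simp only [sRefl, map_smul, smul_smul, smul_sub, smul_eq_mul]

lemma apply_eOp_eq_raiseFn (hβ : β βv = 2) :
    (fun t => β (eOp β βv π t)) = raiseFn (fun t => β (π t)) (yTime β π) (qTime β π) := by
  funext t
  unfold eOp raiseFn
  split_ifs <;> simp only [sRefl, map_add, map_sub, map_smul, smul_eq_mul, hβ]
  ring

lemma eOp_of_le (ht : t ≤ yTime β π) : eOp β βv π t = π t := if_pos ht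

lemma eOp_of_mem_Icc (ht : t ∈ Icc (yTime β π) (qTime β π)) :
    eOp β βv π t = π (yTime β π) + sRefl β βv (π t - π (yTime β π)) := by
  unfold eOp
  rcases eq_or_lt_of_le ht.1 with rfl | hyt
  · simp [sRefl]
  · rw [if_neg hyt.not_ge, if_pos ht.2]

lemma eOp_of_ge {Q : ℝ}
    (hw : IsLastDescentToMin (fun t => β (π t)) Q (yTime β π) (qTime β π))
    (ht : qTime β π ≤ t) : eOp β βv π t = π t + βv := by
  unfold eOp
  rw [if_neg (hw.negDirected.2.1.trans_le ht).not_ge]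
  rcases eq_or_lt_of_le ht with rfl | hqt
  · have hb : β (π (qTime β π) - π (yTime β π)) = -1 := by
      rw [map_sub, hw.apply_q, hw.apply_y]; ring
    rw [if_pos le_rfl, sRefl, hb, neg_one_smul, sub_neg_eq_add]
    abel
  · rw [if_neg hqt.not_ge]

lemma eOp_isPath {Q : ℝ}
    (hw : IsLastDescentToMin (fun t => β (π t)) Q (yTime β π) (qTime β π)) (hπ : IsPath π) :
    IsPath (eOp β βv π) := by
  classical
  obtain ⟨hy0, hyq, hq1, -⟩ := hw.negDirected
  obtain ⟨S, hS, h0, h1, haff⟩ := hπ.2.isAffineOn_of_adjacent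
  set S' := insert (yTime β π) (insert (qTime β π) S)
  have hSS' : S ⊆ S' := fun x hx => by simp [S', hx]
  have hS' : (S' : Set ℝ) ⊆ Icc 0 1 := by
    simp only [S', Finset.coe_insert, insert_subset_iff]
    exact ⟨⟨hy0, hyq.le.trans hq1⟩, ⟨hy0.trans hyq.le, hq1⟩, hS⟩
  refine ⟨by rw [eOp_of_le hy0, hπ.1], isPWLinearOn_of_isAffineOn_adjacent hS' (hSS' h0)
    (hSS' h1) fun c d hcd => ?_⟩
  obtain ⟨a, b, hab⟩ := haff S' hSS' hS' c d hcd
  rcases hcd.2.2.2 _ (Finset.mem_insert_self _ _) with hyc | hdy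
  · rcases hcd.2.2.2 _ (Finset.mem_insert_of_mem (Finset.mem_insert_self _ _)) with hqc | hdq
    · refine ⟨a, b + βv, fun s hs => ?_⟩
      rw [eOp_of_ge hw (hqc.trans hs.1), hab s hs, add_assoc]
    · refine ⟨sRefl β βv a, π (yTime β π) + sRefl β βv (b - π (yTime β π)), fun s hs => ?_⟩
      rw [eOp_of_mem_Icc ⟨hyc.trans hs.1, hs.2.trans hdq⟩, hab s hs, add_sub_assoc, sRefl_add,
        sRefl_smul]
      abel
  · exact ⟨a, b, fun s hs => by rw [eOp_of_le (hs.2.trans hdy), hab s hs]⟩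

lemma Qval_eOp {Q : ℝ} (hβ : β βv = 2)
    (hw : IsLastDescentToMin (fun t => β (π t)) Q (yTime β π) (qTime β π)) :
    Qval β (eOp β βv π) = Q + 1 := by
  rw [Qval, apply_eOp_eq_raiseFn hβ]
  exact hw.isLeast_raiseFn.csInf_eq

end Raising

section Construction

variable {β : V →ₗ[ℝ] ℝ} {π : ℝ → V}

lemma isLeast_Qval (hcont : ContinuousOn (fun t => β (π t)) (Icc 0 1)) :
    IsLeast ((fun t => β (π t)) '' Icc 0 1) (Qval β π) :=
  (isCompact_Icc.image_of_continuousOn hcont).isLeast_sInf ((nonempty_Icc.2 zero_le_one).image _)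

lemma isLeast_qTime (hcont : ContinuousOn (fun t => β (π t)) (Icc 0 1)) :
    IsLeast {t | t ∈ Icc 0 1 ∧ β (π t) = Qval β π} (qTime β π) := by
  obtain ⟨⟨t, ht, hft⟩, -⟩ := isLeast_Qval hcont
  exact (hcont.preimage_isClosed_of_isClosed isClosed_Icc isClosed_singleton).isLeast_csInf
    ⟨t, ht, hft⟩ ⟨0, fun _ hs => hs.1.1⟩

lemma isGreatest_yTime (hcont : ContinuousOn (fun t => β (π t)) (Icc 0 1))
    (h0 : Qval β π + 1 ≤ β (π 0)) :
    IsGreatest {t | t ∈ Icc 0 1 ∧ t < qTime β π ∧ β (π t) = Qval β π + 1} (yTime β π) := by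
  obtain ⟨⟨⟨hq0, hq1⟩, hfq⟩, -⟩ := isLeast_qTime hcont
  have hcont' := hcont.mono (Icc_subset_Icc le_rfl hq1)
  have hset : {t | t ∈ Icc 0 1 ∧ t < qTime β π ∧ β (π t) = Qval β π + 1} =
      Icc 0 (qTime β π) ∩ (fun t => β (π t)) ⁻¹' {Qval β π + 1} := by
    ext t
    refine ⟨fun ⟨ht, htq, hft⟩ => ⟨⟨ht.1, htq.le⟩, hft⟩, fun ⟨ht, hft⟩ => ⟨⟨ht.1, ht.2.trans hq1⟩,
      lt_of_le_of_ne ht.2 (by rintro rfl; simp_all), hft⟩⟩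
  obtain ⟨y, hy, hfy⟩ := intermediate_value_Icc' hq0 hcont' ⟨by rw [hfq]; linarith, h0⟩
  show IsGreatest _ (sSup _)
  rw [hset]
  exact (hcont'.preimage_isClosed_of_isClosed isClosed_Icc isClosed_singleton).isGreatest_csSup
    ⟨y, hy, hfy⟩ ⟨qTime β π, fun _ hs => hs.1.2⟩

lemma isLastDescentToMin_of_isPath (hπ : IsPath π)
    (hint : IsIntegralFn (fun t => β (π t))) (hQ : Qval β π ≤ -1) :
    IsLastDescentToMin (fun t => β (π t)) (Qval β π) (yTime β π) (qTime β π) := by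
  have hcont := hπ.2.continuousOn β
  have hf0 : β (π 0) = 0 := by rw [hπ.1, map_zero]
  obtain ⟨-, hle⟩ := isLeast_Qval hcont
  replace hle : ∀ t ∈ Icc (0 : ℝ) 1, Qval β π ≤ β (π t) := fun t ht => hle ⟨t, ht, rfl⟩
  obtain ⟨⟨⟨hq0, hq1⟩, hfq⟩, hqmin⟩ := isLeast_qTime hcont
  have hlt : ∀ t ∈ Ico 0 (qTime β π), Qval β π < β (π t) := fun t ht =>
    (hle t ⟨ht.1, ht.2.le.trans hq1⟩).lt_of_ne fun h =>
      ht.2.not_ge (hqmin ⟨⟨ht.1, ht.2.le.trans hq1⟩, h.symm⟩)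
  have hq0' : 0 < qTime β π := lt_of_le_of_ne hq0 (by rintro h; rw [← h, hf0] at hfq; linarith)
  -- the first minimum point `q` is either `1` or an interior local minimum point
  obtain ⟨k, hk⟩ : ∃ k : ℤ, Qval β π = k := by
    rcases eq_or_lt_of_le hq1 with h | h
    · obtain ⟨m, hm⟩ := hint.2.1
      exact ⟨m, by rw [← hfq, h]; exact hm⟩
    · obtain ⟨m, hm⟩ := hint.2.2 _ ⟨⟨hq0', h⟩, by
        filter_upwards [Icc_mem_nhds hq0' h] with s hs
        exact hfq ▸ hle s hs⟩
      exact ⟨m, hfq ▸ hm⟩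
  obtain ⟨⟨⟨hy0, -⟩, hyq, hfy⟩, hymax⟩ := isGreatest_yTime hcont (by rw [hf0]; linarith)
  have hmid : ∀ t ∈ Ioo (yTime β π) (qTime β π), β (π t) < Qval β π + 1 := by
    intro t ht
    by_contra! h
    obtain ⟨s, hs, hfs⟩ := intermediate_value_Icc' ht.2.le
      (hcont.mono (Icc_subset_Icc (hy0.trans ht.1.le) hq1)) ⟨by rw [hfq]; linarith, h⟩
    have hsq : s < qTime β π := lt_of_le_of_ne hs.2 (by rintro rfl; linarith)
    linarith [ht.1, hs.1, hymax ⟨⟨hy0.trans (ht.1.trans_le hs.1).le, hs.2.trans hq1⟩, hsq, hfs⟩]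
  have hge : ∀ t ∈ Icc 0 (yTime β π), Qval β π + 1 ≤ β (π t) :=
    le_on_Icc_of_isLocalMin (hcont.mono (Icc_subset_Icc le_rfl (hyq.le.trans hq1))) hy0
      (by rw [hf0]; linarith) hfy.ge fun z hz hmin => hk ▸ hint.add_one_le_of_isLocalMin
        ⟨hz.1, hz.2.trans (hyq.trans_le hq1)⟩ hmin (hk ▸ hlt z ⟨hz.1.le, hz.2.trans hyq⟩)
  exact ⟨⟨k, hk⟩, ⟨hy0, hyq, hq1, hfy, by simp only [hfq]; ring,
    fun t ht => ⟨by linarith [hlt t ⟨hy0.trans ht.1.le, ht.2⟩], hmid t ht⟩⟩, hle, hlt, hge⟩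

end Construction

theorem eOp_section_decomposition {V : Type*} [AddCommGroup V] [Module ℝ V]
    (β : V →ₗ[ℝ] ℝ) (βv : V) (hβ : β βv = 2)
    (π : ℝ → V) (hπ : IsPath π) (hint : IsIntegralFn (fun t => β (π t)))
    (hQ : Qval β π ≤ -1) :
    IsPath (eOp β βv π) ∧
    IsIntegralFn (fun t => β (eOp β βv π t)) ∧
    Qval β (eOp β βv π) = Qval β π + 1 ∧
    ∀ T : Finset ℝ,
      IsSectionDecomposition (fun t => β (π t)) T →
      NoTwoConsecutiveZeroSections (fun t => β (π t)) T →
        (IsSectionDecomposition (fun t => β (eOp β βv π t)) T ∧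
         NoTwoConsecutiveZeroSections (fun t => β (eOp β βv π t)) T ∧
         Adjacent T (yTime β π) (qTime β π) ∧
         IsNegDirectedSectionAt (fun t => β (π t)) (Qval β π + 1) (yTime β π) (qTime β π) ∧
         IsPosDirectedSectionAt (fun t => β (eOp β βv π t)) (Qval β π + 1)
           (yTime β π) (qTime β π) ∧
         (∀ a b : ℝ, Adjacent T a b → b ≤ yTime β π → ∀ m : ℝ,
            (IsZeroSectionAt (fun t => β (π t)) m a b ↔
              IsZeroSectionAt (fun t => β (eOp β βv π t)) m a b) ∧
            (IsStableSectionAt (fun t => β (π t)) m a b ↔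
              IsStableSectionAt (fun t => β (eOp β βv π t)) m a b) ∧
            (IsPosDirectedSectionAt (fun t => β (π t)) m a b ↔
              IsPosDirectedSectionAt (fun t => β (eOp β βv π t)) m a b) ∧
            (IsNegDirectedSectionAt (fun t => β (π t)) m a b ↔
              IsNegDirectedSectionAt (fun t => β (eOp β βv π t)) m a b)) ∧
         (∀ a b : ℝ, Adjacent T a b → qTime β π ≤ a → ∀ m : ℝ,
            (IsZeroSectionAt (fun t => β (π t)) m a b ↔
              IsZeroSectionAt (fun t => β (eOp β βv π t)) (m + 2) a b) ∧
            (IsStableSectionAt (fun t => β (π t)) m a b ↔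
              IsStableSectionAt (fun t => β (eOp β βv π t)) (m + 2) a b) ∧
            (IsPosDirectedSectionAt (fun t => β (π t)) m a b ↔
              IsPosDirectedSectionAt (fun t => β (eOp β βv π t)) (m + 2) a b) ∧
            (IsNegDirectedSectionAt (fun t => β (π t)) m a b ↔
              IsNegDirectedSectionAt (fun t => β (eOp β βv π t)) (m + 2) a b))) := by
  have hw := isLastDescentToMin_of_isPath hπ hint hQ
  rw [apply_eOp_eq_raiseFn hβ]
  refine ⟨eOp_isPath hw hπ, hw.isIntegralFn_raiseFn (hπ.2.continuousOn β) hint, Qval_eOp hβ hw,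
    fun T hT hTz => ?_⟩
  have hyq := hw.adjacent_of_isSectionDecomposition hT
  refine ⟨⟨hT.1, hT.2.1, hT.2.2.1, fun a b hab =>
    hw.isSectionAt_raiseFn hyq hab (hT.2.2.2 a b hab)⟩, ?_, hyq, hw.negDirected,
    hw.posDirected_raiseFn,
    fun a b hab hb => hw.sectionKinds_iff_of_le hab.2.2.1 hb,
    fun a b hab ha => hw.sectionKinds_iff_of_ge hab.2.2.1 ha⟩
  rintro a b c hab hbc ⟨⟨m₁, h₁⟩, ⟨m₂, h₂⟩⟩
  exact hTz a b c hab hbc ⟨hw.exists_isZeroSectionAt_of_raiseFn hyq hab h₁,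
    hw.exists_isZeroSectionAt_of_raiseFn hyq hbc h₂⟩

end MVPaper
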